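/- arXiv:math/0510189 — 3 statements merged into one kernel-verified Lean document; each statement's English description precedes it below -/
import Mathlib

section
/- If δ = γζ is a commutative triangle of applicative morphisms of pcas (ζ : A → B, γ : B → C, δ : A → C) such that δ and ζ are decidable, then γ is decidable. -/
namespace OraclePCA

variable {A : Type} {B : Type} {C : Type} {D : Type}

/-- Extension of a partial application to `Option`, evaluating compound terms. -/
def oapp (ap : A → A → Option A) : Option A → Option A → Option A :=
  fun x y => x.bind fun a => y.bind fun b => ap a b

/-- `A` with the partial binary operation `ap` is a partial combinatory algebra:
there are combinators `K` and `S` with `K a b = a`, `S a b` defined, and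
`S a b c ≃ a c (b c)`. -/
def IsPCA (ap : A → A → Option A) : Prop :=
  ∃ K S : A,
    (∀ a b : A, oapp ap (oapp ap (some K) (some a)) (some b) = some a) ∧
    (∀ a b : A, (oapp ap (oapp ap (some S) (some a)) (some b)).isSome) ∧
    (∀ a b c : A,
      oapp ap (oapp ap (oapp ap (some S) (some a)) (some b)) (some c) =
        oapp ap (oapp ap (some a) (some c)) (oapp ap (some b) (some c)))

/-- Longley's applicative morphisms: a total relation `γ : A → P*(B)` together with
a realizer `r ∈ B`. -/
def IsAppMorphism (apA : A → A → Option A) (apB : B → B → Option B)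
    (γ : A → Set B) : Prop :=
  (∀ a, (γ a).Nonempty) ∧
  ∃ r : B, ∀ a a' c : A, apA a a' = some c →
    ∀ b ∈ γ a, ∀ b' ∈ γ a',
      ∃ d ∈ γ c, oapp apB (oapp apB (some r) (some b)) (some b') = some d

/-- The identity applicative morphism `a ↦ {a}`. -/
def idMor (A : Type) : A → Set A := fun a => {a}

/-- Composition of applicative morphisms: `(δγ)(a) = ⋃ b ∈ γ a, δ b`. -/
def mcomp (δ : B → Set C) (γ : A → Set B) : A → Set C :=
  fun a => ⋃ b ∈ γ a, δ b

/-- The preorder `γ ⪯ δ` on applicative morphisms `A → B`. -/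
def mle (apB : B → B → Option B) (γ δ : A → Set B) : Prop :=
  ∃ s : B, ∀ a : A, ∀ b ∈ γ a, ∃ d ∈ δ a, apB s b = some d

/-- Isomorphism of applicative morphisms. -/
def MIso (apB : B → B → Option B) (γ δ : A → Set B) : Prop :=
  mle apB γ δ ∧ mle apB δ γ

/-- `t`, `f` are Booleans for `ap`, witnessed by a definition-by-cases combinator. -/
def AreBooleans (ap : A → A → Option A) (t f : A) : Prop :=
  t ≠ f ∧ ∃ C : A, ∀ a b : A,
    oapp ap (oapp ap (oapp ap (some C) (some t)) (some a)) (some b) = some a ∧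
    oapp ap (oapp ap (oapp ap (some C) (some f)) (some a)) (some b) = some b

/-- Decidability of an applicative morphism with respect to chosen Booleans. -/
def MDecidable (apB : B → B → Option B) (tA fA : A) (tB fB : B) (γ : A → Set B) : Prop :=
  ∃ d : B, (∀ b ∈ γ tA, apB d b = some tB) ∧ (∀ b ∈ γ fA, apB d b = some fB)

/-- Isomorphism of pcas: applicative morphisms in both directions whose composites are
isomorphic to the identities. -/
def PcaIso (apA : A → A → Option A) (apB : B → B → Option B) : Prop :=
  ∃ (γ : A → Set B) (δ : B → Set A),
    IsAppMorphism apA apB γ ∧ IsAppMorphism apB apA δ ∧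
    MIso apA (mcomp δ γ) (idMor A) ∧ MIso apB (mcomp γ δ) (idMor B)


lemma oapp_eq_some' {ap : A → A → Option A} {o : Option A} {y z : A}
    (h : oapp ap o (some y) = some z) : ∃ w, o = some w ∧ ap w y = some z := by
  cases o with
  | none => simp [oapp] at h
  | some w => exact ⟨w, rfl, h⟩

lemma mkK {ap : A → A → Option A} {K : A}
    (hK : ∀ a b : A, oapp ap (oapp ap (some K) (some a)) (some b) = some a)
    (a : A) : ∃ e : A, ∀ b : A, ap e b = some a := by
  obtain ⟨e, he, -⟩ := oapp_eq_some' (hK a a)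
  refine ⟨e, fun b => ?_⟩
  have h := hK a b
  rw [he] at h
  simpa [oapp] using h

lemma mkS {ap : A → A → Option A} {S : A}
    (hS2 : ∀ a b : A, (oapp ap (oapp ap (some S) (some a)) (some b)).isSome)
    (hSeq : ∀ a b c : A,
      oapp ap (oapp ap (oapp ap (some S) (some a)) (some b)) (some c) =
        oapp ap (oapp ap (some a) (some c)) (oapp ap (some b) (some c)))
    (a b : A) : ∃ e : A, ∀ c : A, ap e c = oapp ap (ap a c) (ap b c) := by
  obtain ⟨e, he⟩ := Option.isSome_iff_exists.mp (hS2 a b)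
  refine ⟨e, fun c => ?_⟩
  have h := hSeq a b c
  rw [he] at h
  simpa [oapp] using h

/-- If `δ = γζ` is a commutative triangle of applicative morphisms with `δ` and `ζ`
decidable, then `γ` is decidable. -/
theorem stmt_6 (apA : A → A → Option A) (apB : B → B → Option B) (apC : C → C → Option C)
    (hA : IsPCA apA) (hB : IsPCA apB) (hC : IsPCA apC)
    (tA fA : A) (tB fB : B) (tC fC : C)
    (hbA : AreBooleans apA tA fA) (hbB : AreBooleans apB tB fB) (hbC : AreBooleans apC tC fC)
    (ζ : A → Set B) (γ : B → Set C)
    (hζ : IsAppMorphism apA apB ζ) (hγ : IsAppMorphism apB apC γ)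
    (hδdec : MDecidable apC tA fA tC fC (mcomp γ ζ))
    (hζdec : MDecidable apB tA fA tB fB ζ) :
    MDecidable apC tB fB tC fC γ := by
  obtain ⟨KC, SC, hK, hS2, hSeq⟩ := hC
  obtain ⟨-, CB, hCB⟩ := hbB
  obtain ⟨hζtot, -⟩ := hζ
  obtain ⟨bt, hbt⟩ := hζtot tA
  obtain ⟨bf, hbf⟩ := hζtot fA
  obtain ⟨hγtot, r, hr⟩ := hγ
  obtain ⟨cc, hcc⟩ := hγtot CB
  obtain ⟨ct, hct⟩ := hγtot bt
  obtain ⟨cf, hcf⟩ := hγtot bf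
  obtain ⟨dδ, hdt, hdf⟩ := hδdec
  -- decompose the B-case-combinator computations
  obtain ⟨vt, hvt1, hvt2⟩ := oapp_eq_some' (hCB bt bf).1
  obtain ⟨ut, hut1, hut2⟩ := oapp_eq_some' hvt1
  obtain ⟨vf, hvf1, hvf2⟩ := oapp_eq_some' (hCB bt bf).2
  obtain ⟨uf, huf1, huf2⟩ := oapp_eq_some' hvf1
  have hut1' : apB CB tB = some ut := by simpa [oapp] using hut1
  have huf1' : apB CB fB = some uf := by simpa [oapp] using huf1
  -- get p := r · cc as an element
  obtain ⟨c0, hc0⟩ := hγtot tB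
  obtain ⟨d10, hd10, hch0⟩ := hr CB tB ut hut1' cc hcc c0 hc0
  obtain ⟨p, hp0, -⟩ := oapp_eq_some' hch0
  have hp : apC r cc = some p := by simpa [oapp] using hp0
  -- build the decider in C
  obtain ⟨kct, hkct⟩ := mkK hK ct
  obtain ⟨g2, hg2⟩ := mkS hS2 hSeq r kct
  obtain ⟨kcf, hkcf⟩ := mkK hK cf
  obtain ⟨g3, hg3⟩ := mkS hS2 hSeq r kcf
  obtain ⟨kg2, hkg2⟩ := mkK hK g2
  obtain ⟨h2, hh2⟩ := mkS hS2 hSeq kg2 p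
  obtain ⟨kg3, hkg3⟩ := mkK hK g3
  obtain ⟨h3, hh3⟩ := mkS hS2 hSeq kg3 h2
  obtain ⟨kd, hkd⟩ := mkK hK dδ
  obtain ⟨d, hd⟩ := mkS hS2 hSeq kd h3
  have main : ∀ (u v w : B) (c : C), apB CB w = some u → apB u bt = some v →
      ∀ w' : B, apB v bf = some w' → c ∈ γ w →
      ∃ e ∈ γ w', apC d c = apC dδ e := by
    intro u v w c hu hv w' hw hcγ
    obtain ⟨d1, hd1, hch1⟩ := hr CB w u hu cc hcc c hcγ
    obtain ⟨p', hp', hpc⟩ := oapp_eq_some' hch1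
    have hp'' : apC r cc = some p' := by simpa [oapp] using hp'
    rw [hp] at hp''
    injection hp'' with hpe
    subst hpe
    obtain ⟨d2, hd2, hch2⟩ := hr u bt v hv d1 hd1 ct hct
    obtain ⟨q, hq, hqct⟩ := oapp_eq_some' hch2
    have hq' : apC r d1 = some q := by simpa [oapp] using hq
    obtain ⟨e, he, hch3⟩ := hr v bf w' hw d2 hd2 cf hcf
    obtain ⟨q3, hq3, hq3cf⟩ := oapp_eq_some' hch3
    have hq3' : apC r d2 = some q3 := by simpa [oapp] using hq3
    refine ⟨e, he, ?_⟩
    have e2 : apC g2 d1 = some d2 := by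
      rw [hg2, hq', hkct]; simpa [oapp] using hqct
    have e3 : apC g3 d2 = some e := by
      rw [hg3, hq3', hkcf]; simpa [oapp] using hq3cf
    have eh2 : apC h2 c = some d2 := by
      rw [hh2, hkg2, hpc]; simpa [oapp] using e2
    have eh3 : apC h3 c = some e := by
      rw [hh3, hkg3, eh2]; simpa [oapp] using e3
    rw [hd, hkd, eh3]
    simp [oapp]
  refine ⟨d, ?_, ?_⟩
  · intro c hcγ
    obtain ⟨e, he, heq⟩ := main ut vt tB c hut1' hut2 bt hvt2 hcγ
    rw [heq]
    exact hdt e (by simp only [mcomp, Set.mem_iUnion]; exact ⟨bt, hbt, he⟩)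
  · intro c hcγ
    obtain ⟨e, he, heq⟩ := main uf vf fB c huf1' huf2 bf hvf2 hcγ
    rw [heq]
    exact hdf e (by simp only [mcomp, Set.mem_iUnion]; exact ⟨bf, hbf, he⟩)


end OraclePCA
end

section
/- The partial endofunction f is representable with respect to the applicative morphism ι_f : A → A[f]: there is an element r_f ∈ A[f] such that for every a in the domain of f, r_f ·^f a is defined and equals f(a). -/
namespace OraclePCA

variable {A : Type} {B : Type} {C : Type} {D : Type}

/-- Pairing combinators, Booleans, numerals and a coding of finite sequences in a pca,
with the standard combinators (length, indexing, concatenation) and representability of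
partial recursive functions on the numerals. -/
structure Coding (A : Type) (ap : A → A → Option A) : Type where
  pr : A → A → A
  p : A
  p0 : A
  p1 : A
  p_spec : ∀ a b : A, oapp ap (ap p a) (some b) = some (pr a b)
  p0_spec : ∀ a b : A, ap p0 (pr a b) = some a
  p1_spec : ∀ a b : A, ap p1 (pr a b) = some b
  tt : A
  ff : A
  bool : AreBooleans ap tt ff
  code : List A → A
  code_inj : Function.Injective code
  num : ℕ → A
  num_inj : Function.Injective num
  lh : A
  lh_spec : ∀ u : List A, ap lh (code u) = some (num u.length)
  idx : A
  idx_spec : ∀ (u : List A) (i : ℕ) (h : i < u.length),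
    oapp ap (ap idx (code u)) (some (num i)) = some (u.get ⟨i, h⟩)
  cat : A
  cat_spec : ∀ u v : List A,
    oapp ap (ap cat (code u)) (some (code v)) = some (code (u ++ v))
  partrec_rep : ∀ F : ℕ →. ℕ, Nat.Partrec F → ∃ aF : A, ∀ n : ℕ,
    ((F n).Dom ↔ (ap aF (num n)).isSome) ∧ ∀ m ∈ F n, ap aF (num n) = some (num m)

/-- `u` is an `f`-dialogue between `a` and `b`: at each stage `i`, `a` applied to the
code of `[b] * u^{<i}` returns `p ⊥ vᵢ` with `f vᵢ = uᵢ`. -/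
def IsDialogue (ap : A → A → Option A) (c : Coding A ap) (f : A → Option A)
    (a b : A) (u : List A) : Prop :=
  ∀ (i : ℕ) (h : i < u.length), ∃ v : A,
    ap a (c.code (b :: u.take i)) = some (c.pr c.ff v) ∧ f v = some (u.get ⟨i, h⟩)

/-- The graph of the application of `A[f]`: `a ·^f b = x` iff there is an `f`-dialogue
`u` between `a` and `b` with `a · ([b] * u) = p ⊤ x`. -/
def FApp (ap : A → A → Option A) (c : Coding A ap) (f : A → Option A)
    (a b x : A) : Prop :=
  ∃ u : List A, IsDialogue ap c f a b u ∧ ap a (c.code (b :: u)) = some (c.pr c.tt x)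

open Classical in
/-- The application `·^f` of the pca `A[f]`. -/
noncomputable def fapp (ap : A → A → Option A) (c : Coding A ap) (f : A → Option A)
    (a b : A) : Option A :=
  if h : ∃ x : A, FApp ap c f a b x then some h.choose else none

/-- Terms with one free variable over `A`. -/
inductive Tm (A : Type) where
  | var : Tm A
  | const : A → Tm A
  | app : Tm A → Tm A → Tm A

/-- Substitute `a` for the variable. -/
def Tm.sub (a : A) : Tm A → Tm A
  | .var => .const a
  | .const c => .const c
  | .app t u => .app (t.sub a) (u.sub a)

/-- Evaluate a (closed) term. -/
def Tm.evalc (ap : A → A → Option A) : Tm A → Option A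
  | .var => none
  | .const c => some c
  | .app t u => oapp ap (t.evalc ap) (u.evalc ap)

/-- S-K abstraction of the variable. -/
def Tm.abs (K S : A) : Tm A → Tm A
  | .var => .app (.app (.const S) (.const K)) (.const K)
  | .const c => .app (.const K) (.const c)
  | .app t u => .app (.app (.const S) (t.abs K S)) (u.abs K S)

theorem oapp_some {ap : A → A → Option A} (x y : A) :
    oapp ap (some x) (some y) = ap x y := rfl

theorem abs_spec (ap : A → A → Option A) (K S : A)
    (hK : ∀ a b : A, oapp ap (oapp ap (some K) (some a)) (some b) = some a)
    (hS1 : ∀ a b : A, (oapp ap (oapp ap (some S) (some a)) (some b)).isSome)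
    (hS2 : ∀ a b c : A, oapp ap (oapp ap (oapp ap (some S) (some a)) (some b)) (some c) =
        oapp ap (oapp ap (some a) (some c)) (oapp ap (some b) (some c))) :
    ∀ t : Tm A, ∃ e : A, (Tm.abs K S t).evalc ap = some e ∧
      ∀ a : A, ap e a = ((t.sub a).evalc ap) := by
  have hK1 : ∀ a : A, ∃ k : A, ap K a = some k := by
    intro a
    have := hK a a
    rcases h : oapp ap (some K) (some a) with _ | k
    · rw [h] at this; simp [oapp] at this
    · exact ⟨k, h⟩
  intro t
  induction t with
  | var =>
    have h1 := hS1 K K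
    rcases h : oapp ap (oapp ap (some S) (some K)) (some K) with _ | e
    · rw [h] at h1; simp at h1
    · refine ⟨e, h, fun a => ?_⟩
      obtain ⟨k, hk⟩ := hK1 a
      have h2 := hS2 K K a
      rw [h] at h2
      simp only [oapp_some, hk] at h2
      have h3 := hK a k
      simp only [oapp_some, hk] at h3
      simp [Tm.sub, Tm.evalc, h2, h3]
  | const c =>
    obtain ⟨k, hk⟩ := hK1 c
    refine ⟨k, hk, fun a => ?_⟩
    have h3 := hK c a
    simp only [oapp_some, hk] at h3
    simp [Tm.sub, Tm.evalc, h3]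
  | app t u iht ihu =>
    obtain ⟨et, het, het'⟩ := iht
    obtain ⟨eu, heu, heu'⟩ := ihu
    have h1 := hS1 et eu
    rcases h : oapp ap (oapp ap (some S) (some et)) (some eu) with _ | e
    · rw [h] at h1; simp at h1
    · simp only [oapp_some] at h
      refine ⟨e, by simp [Tm.abs, Tm.evalc, het, heu, oapp_some, h], fun a => ?_⟩
      have h2 := hS2 et eu a
      simp only [oapp_some] at h2
      rw [h] at h2
      simp only [oapp_some] at h2
      simp [Tm.sub, Tm.evalc, h2, het' a, heu' a]

/-- `f` is representable with respect to `ι_f : A → A[f]`: there is `r_f` such that for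
every `a ∈ dom f`, `r_f ·^f a` is defined and equals `f a`. -/
theorem stmt_10 (ap : A → A → Option A) (hA : IsPCA ap) (c : Coding A ap)
    (f : A → Option A) :
    ∃ rf : A, ∀ a y : A, f a = some y → fapp ap c f rf a = some y := by
  classical
  obtain ⟨K, S, hK, hS1, hS2⟩ := hA
  obtain ⟨q, hq⟩ := c.partrec_rep (fun n => Part.some n.pred)
    (Nat.Partrec.of_primrec Nat.Primrec.pred)
  have hq' : ∀ n : ℕ, ap q (c.num n) = some (c.num n.pred) := fun n =>
    (hq n).2 n.pred (Part.mem_some _)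
  set W : A := c.code [c.ff, c.tt] with hW
  set L : Tm A := .app (.const q) (.app (.const c.lh) .var) with hL
  set T : Tm A := .app (.app (.const c.p) (.app (.app (.const c.idx) (.const W)) L))
                       (.app (.app (.const c.idx) .var) L) with hT
  obtain ⟨rf, -, hrf⟩ := abs_spec ap K S hK hS1 hS2 T
  refine ⟨rf, fun a y hfa => ?_⟩
  have rf1 : ∀ b : A, ap rf (c.code [b]) = some (c.pr c.ff b) := by
    intro b
    have e1 : ap c.lh (c.code [b]) = some (c.num 1) := by simpa using c.lh_spec [b]
    have e2 : ap q (c.num 1) = some (c.num 0) := hq' 1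
    have e3 : oapp ap (ap c.idx W) (some (c.num 0)) = some c.ff :=
      c.idx_spec [c.ff, c.tt] 0 (by norm_num)
    have e4 : oapp ap (ap c.idx (c.code [b])) (some (c.num 0)) = some b :=
      c.idx_spec [b] 0 (by norm_num)
    have e5 := c.p_spec c.ff b
    rw [hrf]
    show oapp ap (oapp ap (some c.p) (oapp ap (oapp ap (some c.idx) (some W))
        (oapp ap (some q) (oapp ap (some c.lh) (some (c.code [b]))))))
      (oapp ap (oapp ap (some c.idx) (some (c.code [b])))
        (oapp ap (some q) (oapp ap (some c.lh) (some (c.code [b]))))) = _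
    simp only [oapp_some, e1, e2, e3, e4]
    simpa using e5
  have rf2 : ∀ b v : A, ap rf (c.code [b, v]) = some (c.pr c.tt v) := by
    intro b v
    have e1 : ap c.lh (c.code [b, v]) = some (c.num 2) := by simpa using c.lh_spec [b, v]
    have e2 : ap q (c.num 2) = some (c.num 1) := hq' 2
    have e3 : oapp ap (ap c.idx W) (some (c.num 1)) = some c.tt :=
      c.idx_spec [c.ff, c.tt] 1 (by norm_num)
    have e4 : oapp ap (ap c.idx (c.code [b, v])) (some (c.num 1)) = some v :=
      c.idx_spec [b, v] 1 (by norm_num)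
    have e5 := c.p_spec c.tt v
    rw [hrf]
    show oapp ap (oapp ap (some c.p) (oapp ap (oapp ap (some c.idx) (some W))
        (oapp ap (some q) (oapp ap (some c.lh) (some (c.code [b, v]))))))
      (oapp ap (oapp ap (some c.idx) (some (c.code [b, v])))
        (oapp ap (some q) (oapp ap (some c.lh) (some (c.code [b, v]))))) = _
    simp only [oapp_some, e1, e2, e3, e4]
    simpa using e5
  have httff : c.tt ≠ c.ff := c.bool.1
  have hprinj : ∀ b₁ v₁ b₂ v₂ : A, c.pr b₁ v₁ = c.pr b₂ v₂ → b₁ = b₂ ∧ v₁ = v₂ := by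
    intro b₁ v₁ b₂ v₂ h
    have h0 := c.p0_spec b₁ v₁
    have h1 := c.p1_spec b₁ v₁
    rw [h, c.p0_spec b₂ v₂] at h0
    rw [h, c.p1_spec b₂ v₂] at h1
    exact ⟨(Option.some.inj h0).symm, (Option.some.inj h1).symm⟩
  have hFy : FApp ap c f rf a y := by
    refine ⟨[y], ?_, rf2 a y⟩
    intro i hi
    have h0 : i = 0 := by simpa using hi
    subst h0
    exact ⟨a, rf1 a, hfa⟩
  have huniq : ∀ x : A, FApp ap c f rf a x → x = y := by
    rintro x ⟨u, hd, hfin⟩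
    match u with
    | [] =>
        have h1 := (rf1 a).symm.trans hfin
        exact absurd (hprinj _ _ _ _ (Option.some.inj h1)).1.symm httff
    | [w] =>
        obtain ⟨v, hv1, hv2⟩ := hd 0 (by simp)
        have hv1' : ap rf (c.code [a]) = some (c.pr c.ff v) := hv1
        have hv2' : f v = some w := hv2
        have h1 := (rf1 a).symm.trans hv1'
        have hva : v = a := ((hprinj _ _ _ _ (Option.some.inj h1)).2).symm
        rw [hva] at hv2'
        have hwy : w = y := Option.some.inj (hv2'.symm.trans hfa)
        have h2 := (rf2 a w).symm.trans hfin
        have hxw : w = x := (hprinj _ _ _ _ (Option.some.inj h2)).2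
        exact hxw.symm.trans hwy
    | w :: w' :: rest =>
        obtain ⟨v, hv1, -⟩ := hd 1 (by simp)
        have hv1' : ap rf (c.code [a, w]) = some (c.pr c.ff v) := hv1
        have h1 := (rf2 a w).symm.trans hv1'
        exact absurd (hprinj _ _ _ _ (Option.some.inj h1)).1 httff
  have hex : ∃ x : A, FApp ap c f rf a x := ⟨y, hFy⟩
  simp only [fapp, dif_pos hex]
  exact congrArg some (huniq _ hex.choose_spec)

end OraclePCA
end

section
/- For any pca A and any partial endofunction f on A, the pca A[f] is not total: the element a = Λ*x. p⊥⊥ satisfies that a ·^f b is undefined for every b. -/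
namespace OraclePCA

variable {A : Type} {B : Type} {C : Type} {D : Type}

/-- `A[f]` is never total: the element `a = Λ*x. p⊥⊥` satisfies that `a ·^f b` is
undefined for every `b`. -/
theorem stmt_15 (ap : A → A → Option A) (hA : IsPCA ap) (c : Coding A ap)
    (f : A → Option A) :
    (∃ a : A, (∀ x : A, ap a x = some (c.pr c.ff c.ff)) ∧
      ∀ b : A, fapp ap c f a b = none) ∧
    ¬ ∀ a b : A, (fapp ap c f a b).isSome := by
  obtain ⟨K, S, hK, hS, hSS⟩ := hA
  -- extract the element a₀ = K (pr ff ff)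
  have h := hK (c.pr c.ff c.ff) (c.pr c.ff c.ff)
  obtain ⟨a₀, ha₀⟩ : ∃ a₀, ap K (c.pr c.ff c.ff) = some a₀ := by
    cases h' : ap K (c.pr c.ff c.ff) with
    | none => simp [oapp, h'] at h
    | some a₀ => exact ⟨a₀, rfl⟩
  have hconst : ∀ x : A, ap a₀ x = some (c.pr c.ff c.ff) := by
    intro x
    have h := hK (c.pr c.ff c.ff) x
    simpa [oapp, ha₀] using h
  have hnone : ∀ b : A, fapp ap c f a₀ b = none := by
    intro b
    rw [fapp, dif_neg]
    rintro ⟨x, u, hdia, hfin⟩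
    rw [hconst] at hfin
    have : c.tt = c.ff := by
      have h0 : ap c.p0 (c.pr c.tt x) = ap c.p0 (c.pr c.ff c.ff) := by
        rw [Option.some_inj.mp hfin]
      rw [c.p0_spec, c.p0_spec] at h0
      exact Option.some_inj.mp h0
    exact c.bool.1 this
  refine ⟨⟨a₀, hconst, hnone⟩, fun h => ?_⟩
  have := h a₀ a₀
  rw [hnone a₀] at this
  simp at this

end OraclePCA
end
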